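/- arXiv:1007.3416 — 2 statements merged into one kernel-verified Lean document; each statement's English description precedes it below -/
import Mathlib

section
/- Let c ∈ ℂ, N ∈ ℕ, k ∈ ℕ and τ ∈ ℂ. The function U_{τ,k}(z) = ln( 8(N+1)² |1 + τ((N+1+k)/(N+1)) z^k|² / (1+|z^{N+1}(1+τz^k)−c|²)² ) satisfies the singular Liouville equation ΔU + |z|^{2N} e^U = 0 at every point of the open set {z ∈ ℂ \ {0} : 1 + τ((N+1+k)/(N+1)) z^k ≠ 0}. -/
/-- The Euclidean Laplacian on ℝ² ≅ ℂ of a real-valued function: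
`Δf = ∂²f/∂x² + ∂²f/∂y²`. -/
noncomputable def planeLaplacian (f : ℂ → ℝ) (z : ℂ) : ℝ :=
  fderiv ℝ (fun w => fderiv ℝ f w 1) z 1 +
    fderiv ℝ (fun w => fderiv ℝ f w Complex.I) z Complex.I

/-! Put `G(z) = z^{N+1}(1 + τ z^k) - c`, so that `G' = (N+1) z^N (1 + τ((N+1+k)/(N+1)) z^k)`.
Away from the zeros of `G'`, `U` is Liouville's potential `V = log (8|G'|² / (1 + |G|²)²)` minus
the harmonic function `log |z^{2N}|`, and `|z|^{2N} e^U = e^V`. Liouville's potential solves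
`ΔV + e^V = 0`: `log |G'|` is harmonic, and the chain rule `Δ (φ ∘ F) = φ'' |∇F|² + φ' ΔF` with
`φ = log (1 + ·)`, `F = |G|²`, `ΔF = 4|G'|²` and `|∇F|² = 4|G|²|G'|²` gives
`Δ log (1 + |G|²) = 4|G'|² / (1 + |G|²)²`. -/

open Complex Filter Topology InnerProductSpace Laplacian

section SecondDerivatives

variable {E : Type*} [NormedAddCommGroup E] [NormedSpace ℝ E] {z : E}

theorem fderiv_fderiv_apply {f : E → ℝ} (hf : DifferentiableAt ℝ (fderiv ℝ f) z) (u v : E) :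
    fderiv ℝ (fun w => fderiv ℝ f w v) z u = fderiv ℝ (fderiv ℝ f) z u v := by
  rw [fderiv_clm_apply hf (differentiableAt_const v)]
  simp

theorem ContDiffAt.fderiv_fderiv_comp_apply {φ φ' : ℝ → ℝ} {φ'' : ℝ} {F : E → ℝ}
    (hφ : ∀ᶠ t in 𝓝 (F z), HasDerivAt φ (φ' t) t) (hφ' : HasDerivAt φ' φ'' (F z))
    (hF : ContDiffAt ℝ 2 F z) (v : E) :
    fderiv ℝ (fun w => fderiv ℝ (φ ∘ F) w v) z v =
      φ'' * fderiv ℝ F z v ^ 2 + φ' (F z) * fderiv ℝ (fun w => fderiv ℝ F w v) z v := by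
  have hFd : ∀ᶠ w in 𝓝 z, DifferentiableAt ℝ F w :=
    (hF.eventually (by simp)).mono fun w hw => hw.differentiableAt two_ne_zero
  have hFv : DifferentiableAt ℝ (fun w => fderiv ℝ F w v) z :=
    ((hF.fderiv_right (m := 1) le_rfl).differentiableAt one_ne_zero).clm_apply
      (differentiableAt_const v)
  have hchain : (fun w => fderiv ℝ (φ ∘ F) w v) =ᶠ[𝓝 z] fun w => φ' (F w) * fderiv ℝ F w v := by
    filter_upwards [hFd, hF.continuousAt.tendsto.eventually hφ] with w hw hφw
    rw [(hφw.comp_hasFDerivAt w hw.hasFDerivAt).fderiv]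
    simp
  have hprod : HasFDerivAt (fun w => φ' (F w) * fderiv ℝ F w v) _ z :=
    (hφ'.comp_hasFDerivAt z (hF.differentiableAt two_ne_zero).hasFDerivAt).mul hFv.hasFDerivAt
  rw [hchain.fderiv_eq, hprod.fderiv]
  simp only [Function.comp_apply, add_apply, smul_apply, smul_eq_mul]
  ring

end SecondDerivatives

noncomputable def planeGradientNormSq (f : ℂ → ℝ) (z : ℂ) : ℝ :=
  fderiv ℝ f z 1 ^ 2 + fderiv ℝ f z I ^ 2

section PlaneLaplacian

variable {f g : ℂ → ℝ} {z : ℂ}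

theorem planeLaplacian_congr_nhds (h : f =ᶠ[𝓝 z] g) :
    planeLaplacian f z = planeLaplacian g z := by
  have hd : ∀ v : ℂ, (fun w => fderiv ℝ f w v) =ᶠ[𝓝 z] fun w => fderiv ℝ g w v := fun v => by
    filter_upwards [h.fderiv (𝕜 := ℝ)] with w hw
    rw [hw]
  simp only [planeLaplacian, (hd 1).fderiv_eq, (hd I).fderiv_eq]

theorem planeLaplacian_const_add (a : ℝ) :
    planeLaplacian (fun w => a + f w) z = planeLaplacian f z := by
  simp only [planeLaplacian, fderiv_const_add]

theorem ContDiffAt.planeLaplacian_eq_laplacian (hf : ContDiffAt ℝ 2 f z) :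
    planeLaplacian f z = Δ f z := by
  have hf' : DifferentiableAt ℝ (fderiv ℝ f) z :=
    (hf.fderiv_right (m := 1) le_rfl).differentiableAt one_ne_zero
  simp [planeLaplacian, laplacian_eq_iteratedFDeriv_complexPlane, iteratedFDeriv_two_apply,
    fderiv_fderiv_apply hf']

theorem InnerProductSpace.HarmonicAt.planeLaplacian_eq_zero (hf : HarmonicAt f z) :
    planeLaplacian f z = 0 := by
  rw [hf.1.planeLaplacian_eq_laplacian, hf.2.self_of_nhds, Pi.zero_apply]

theorem ContDiffAt.planeLaplacian_sub (hf : ContDiffAt ℝ 2 f z) (hg : ContDiffAt ℝ 2 g z) :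
    planeLaplacian (fun w => f w - g w) z = planeLaplacian f z - planeLaplacian g z := by
  rw [(hf.sub hg).planeLaplacian_eq_laplacian, hf.planeLaplacian_eq_laplacian,
    hg.planeLaplacian_eq_laplacian, ← hf.laplacian_sub hg]
  rfl

theorem ContDiffAt.planeLaplacian_const_mul (a : ℝ) (hf : ContDiffAt ℝ 2 f z) :
    planeLaplacian (fun w => a * f w) z = a * planeLaplacian f z := by
  rw [(contDiffAt_const.mul hf).planeLaplacian_eq_laplacian, hf.planeLaplacian_eq_laplacian,
    ← smul_eq_mul, ← laplacian_smul a hf]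
  rfl

theorem ContDiffAt.planeLaplacian_comp {φ φ' : ℝ → ℝ} {φ'' : ℝ} {F : ℂ → ℝ}
    (hφ : ∀ᶠ t in 𝓝 (F z), HasDerivAt φ (φ' t) t)
    (hφ' : HasDerivAt φ' φ'' (F z)) (hF : ContDiffAt ℝ 2 F z) :
    planeLaplacian (φ ∘ F) z = φ'' * planeGradientNormSq F z + φ' (F z) * planeLaplacian F z := by
  simp only [planeLaplacian, planeGradientNormSq, hF.fderiv_fderiv_comp_apply hφ hφ']
  ring

end PlaneLaplacian

section NormSq

variable {G : ℂ → ℂ} {z : ℂ}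

theorem DifferentiableAt.fderiv_norm_sq_apply (hG : DifferentiableAt ℂ G z) (v : ℂ) :
    fderiv ℝ (fun w => ‖G w‖ ^ 2) z v = 2 * ⟪G z, deriv G z * v⟫_ℝ := by
  rw [hG.hasDerivAt.complexToReal_fderiv.norm_sq.fderiv]
  simp only [smul_apply, ContinuousLinearMap.comp_apply, one_apply_eq_self, coe_innerSL_apply,
    nsmul_eq_mul, smul_eq_mul]
  norm_num [mul_comm v]

theorem AnalyticAt.fderiv_fderiv_norm_sq_apply (hG : AnalyticAt ℂ G z) (v : ℂ) :
    fderiv ℝ (fun w => fderiv ℝ (fun w => ‖G w‖ ^ 2) w v) z v =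
      2 * (‖deriv G z * v‖ ^ 2 + ⟪G z, deriv (deriv G) z * v * v⟫_ℝ) := by
  have hfirst : (fun w => fderiv ℝ (fun w => ‖G w‖ ^ 2) w v) =ᶠ[𝓝 z]
      fun w => 2 * ⟪G w, deriv G w * v⟫_ℝ := by
    filter_upwards [hG.eventually_analyticAt] with w hw
    exact hw.differentiableAt.fderiv_norm_sq_apply v
  have hinner : HasFDerivAt (fun w => 2 * ⟪G w, deriv G w * v⟫_ℝ) _ z :=
    (hG.differentiableAt.hasDerivAt.complexToReal_fderiv.inner ℝ
      (hG.deriv.differentiableAt.hasDerivAt.mul_const v).complexToReal_fderiv).const_mul 2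
  rw [hfirst.fderiv_eq, hinner.fderiv]
  simp only [smul_apply, ContinuousLinearMap.comp_apply, ContinuousLinearMap.prod_apply,
    one_apply_eq_self, smul_eq_mul, fderivInnerCLM_apply, real_inner_self_eq_norm_sq]
  ring

theorem AnalyticAt.planeLaplacian_norm_sq (hG : AnalyticAt ℂ G z) :
    planeLaplacian (fun w => ‖G w‖ ^ 2) z = 4 * ‖deriv G z‖ ^ 2 := by
  simp only [planeLaplacian, hG.fderiv_fderiv_norm_sq_apply, mul_one, norm_mul, norm_I, mul_assoc,
    I_mul_I, mul_neg, inner_neg_right]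
  ring

theorem DifferentiableAt.planeGradientNormSq_norm_sq (hG : DifferentiableAt ℂ G z) :
    planeGradientNormSq (fun w => ‖G w‖ ^ 2) z = 4 * ‖G z‖ ^ 2 * ‖deriv G z‖ ^ 2 := by
  rw [planeGradientNormSq, hG.fderiv_norm_sq_apply, hG.fderiv_norm_sq_apply]
  simp only [Complex.inner, Complex.sq_norm, normSq_apply,
    mul_re, mul_im, conj_re, conj_im, I_re, I_im, one_re, one_im]
  ring

end NormSq

section Liouville

variable {G : ℂ → ℂ} {z : ℂ}

theorem AnalyticAt.contDiffAt_log_one_add_norm_sq (hG : AnalyticAt ℂ G z) :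
    ContDiffAt ℝ 2 (fun w => Real.log (1 + ‖G w‖ ^ 2)) z :=
  (contDiffAt_const.add ((hG.contDiffAt.restrict_scalars ℝ).norm_sq ℝ)).log (by positivity)

theorem AnalyticAt.planeLaplacian_log_one_add_norm_sq (hG : AnalyticAt ℂ G z) :
    planeLaplacian (fun w => Real.log (1 + ‖G w‖ ^ 2)) z =
      4 * ‖deriv G z‖ ^ 2 / (1 + ‖G z‖ ^ 2) ^ 2 := by
  have hpos : 0 < 1 + ‖G z‖ ^ 2 := by positivity
  have hlog : ∀ᶠ t in 𝓝 (‖G z‖ ^ 2), HasDerivAt (fun t => Real.log (1 + t)) (1 + t)⁻¹ t := by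
    filter_upwards [eventually_gt_nhds (show -1 < ‖G z‖ ^ 2 by linarith)] with t ht
    simpa using ((hasDerivAt_id' t).const_add 1).log (by linarith)
  have hinv : HasDerivAt (fun t => (1 + t)⁻¹) (-1 / (1 + ‖G z‖ ^ 2) ^ 2) (‖G z‖ ^ 2) :=
    ((hasDerivAt_id' _).const_add 1).inv hpos.ne'
  have hS : ContDiffAt ℝ 2 (fun w => ‖G w‖ ^ 2) z := (hG.contDiffAt.restrict_scalars ℝ).norm_sq ℝ
  change planeLaplacian ((fun t => Real.log (1 + t)) ∘ fun w => ‖G w‖ ^ 2) z = _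
  rw [hS.planeLaplacian_comp hlog hinv, hG.planeLaplacian_norm_sq,
    hG.differentiableAt.planeGradientNormSq_norm_sq]
  field_simp
  ring

noncomputable def liouvillePotential (G : ℂ → ℂ) (w : ℂ) : ℝ :=
  Real.log (8 * ‖deriv G w‖ ^ 2 / (1 + ‖G w‖ ^ 2) ^ 2)

theorem liouvillePotential_eq_log_add {w a b : ℂ} (h : deriv G w = a * b) (ha : a ≠ 0)
    (hb : b ≠ 0) :
    liouvillePotential G w =
      Real.log (‖a‖ ^ 2) + Real.log (8 * ‖b‖ ^ 2 / (1 + ‖G w‖ ^ 2) ^ 2) := by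
  rw [liouvillePotential, ← Real.log_mul (by positivity) (by positivity), h, norm_mul]
  ring_nf

theorem AnalyticAt.liouvillePotential_eventuallyEq (hG : AnalyticAt ℂ G z)
    (hG' : deriv G z ≠ 0) :
    liouvillePotential G =ᶠ[𝓝 z]
      fun w => Real.log 8 + 2 * (Real.log ‖deriv G w‖ - Real.log (1 + ‖G w‖ ^ 2)) := by
  filter_upwards [hG.deriv.continuousAt.eventually_ne hG'] with w hw
  rw [liouvillePotential, Real.log_div (by positivity) (by positivity),
    Real.log_mul (by norm_num) (by positivity), Real.log_pow, Real.log_pow]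
  push_cast
  ring

theorem AnalyticAt.contDiffAt_liouvillePotential (hG : AnalyticAt ℂ G z) (hG' : deriv G z ≠ 0) :
    ContDiffAt ℝ 2 (liouvillePotential G) z := by
  have hdecomp := (hG.deriv.harmonicAt_log_norm hG').1.sub hG.contDiffAt_log_one_add_norm_sq
  exact (contDiffAt_const.add (contDiffAt_const.mul hdecomp)).congr_of_eventuallyEq
    (hG.liouvillePotential_eventuallyEq hG')

theorem AnalyticAt.planeLaplacian_liouvillePotential_add_exp (hG : AnalyticAt ℂ G z)
    (hG' : deriv G z ≠ 0) :
    planeLaplacian (liouvillePotential G) z + Real.exp (liouvillePotential G z) = 0 := by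
  have hharm := hG.deriv.harmonicAt_log_norm hG'
  have hS := hG.contDiffAt_log_one_add_norm_sq
  rw [planeLaplacian_congr_nhds (hG.liouvillePotential_eventuallyEq hG'),
    planeLaplacian_const_add, (hharm.1.sub hS).planeLaplacian_const_mul,
    hharm.1.planeLaplacian_sub hS, hharm.planeLaplacian_eq_zero,
    hG.planeLaplacian_log_one_add_norm_sq, liouvillePotential, Real.exp_log (by positivity)]
  ring

end Liouville

theorem hasDerivAt_pow_succ_mul_one_add_mul_pow_sub (N k : ℕ) (τ c w : ℂ) :
    HasDerivAt (fun w => w ^ (N + 1) * (1 + τ * w ^ k) - c)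
      (((N : ℂ) + 1) * w ^ N * (1 + τ * (((N : ℂ) + 1 + k) / ((N : ℂ) + 1)) * w ^ k)) w := by
  have hN : (N : ℂ) + 1 ≠ 0 := by exact_mod_cast N.succ_ne_zero
  refine (((hasDerivAt_pow (N + 1) w).mul
    (((hasDerivAt_pow k w).const_mul τ).const_add 1)).sub_const c).congr_deriv ?_
  rcases k with _ | k
  · simp [div_self hN]
  · simp only [Nat.add_sub_cancel, Nat.cast_add, Nat.cast_one]
    field_simp
    ring

/-- The family `U_{τ,k}` solves the singular Liouville equation
`ΔU + |z|^{2N} e^U = 0` away from the origin and from the zeroes of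
`1 + τ((N+1+k)/(N+1)) z^k`. -/
theorem family_solves_singular_liouville (c : ℂ) (N k : ℕ) (τ : ℂ)
    (U : ℂ → ℝ)
    (hU : ∀ z : ℂ, U z = Real.log
      (8 * (N + 1) ^ 2 *
          ‖1 + τ * (((N : ℂ) + 1 + k) / ((N : ℂ) + 1)) * z ^ k‖ ^ 2 /
        (1 + ‖z ^ (N + 1) * (1 + τ * z ^ k) - c‖ ^ 2) ^ 2)) :
    ∀ z : ℂ, z ≠ 0 → 1 + τ * (((N : ℂ) + 1 + k) / ((N : ℂ) + 1)) * z ^ k ≠ 0 →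
      planeLaplacian U z + ‖z‖ ^ (2 * N) * Real.exp (U z) = 0 := by
  intro z hz hgz
  set G : ℂ → ℂ := fun w => w ^ (N + 1) * (1 + τ * w ^ k) - c
  have hdG := hasDerivAt_pow_succ_mul_one_add_mul_pow_sub N k τ c
  have hN : (N : ℂ) + 1 ≠ 0 := by exact_mod_cast N.succ_ne_zero
  have hG : AnalyticAt ℂ G z := by fun_prop
  have hG' : deriv G z ≠ 0 := by
    rw [(hdG z).deriv]
    exact mul_ne_zero (mul_ne_zero hN (pow_ne_zero N hz)) hgz
  have hUV : U =ᶠ[𝓝 z] fun w => liouvillePotential G w - Real.log ‖w ^ (2 * N)‖ := by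
    filter_upwards [eventually_ne_nhds hz, (by fun_prop : Continuous fun w : ℂ =>
      1 + τ * (((N : ℂ) + 1 + k) / ((N : ℂ) + 1)) * w ^ k).continuousAt.eventually_ne hgz]
      with w hw hgw
    have hnorm : ‖(N : ℂ) + 1‖ = N + 1 := by exact_mod_cast Complex.norm_natCast (N + 1)
    rw [hU, liouvillePotential_eq_log_add (by rw [(hdG w).deriv]; ring) (pow_ne_zero N hw)
      (mul_ne_zero hN hgw), norm_pow, norm_pow, ← pow_mul, mul_comm N 2, add_sub_cancel_left,
      norm_mul, hnorm]
    congr 1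
    ring
  have hharm := (by fun_prop : AnalyticAt ℂ (fun w : ℂ => w ^ (2 * N)) z).harmonicAt_log_norm
    (pow_ne_zero _ hz)
  rw [planeLaplacian_congr_nhds hUV,
    (hG.contDiffAt_liouvillePotential hG').planeLaplacian_sub hharm.1,
    hharm.planeLaplacian_eq_zero, sub_zero, hUV.self_of_nhds, Real.exp_sub,
    Real.exp_log (norm_pos_iff.2 (pow_ne_zero _ hz)), norm_pow, mul_div_cancel₀ _ (by positivity)]
  exact hG.planeLaplacian_liouvillePotential_add_exp hG'
end

section
/- Let c = c₁ + ic₂ ∈ ℂ (c₁, c₂ ∈ ℝ), N ∈ ℕ, and set Z₀(z) = (1−|z^{N+1}−c|²)/(1+|z^{N+1}−c|²), Z₁(z) = Re(z^{N+1}−c)/(1+|z^{N+1}−c|²), Z₂(z) = Im(z^{N+1}−c)/(1+|z^{N+1}−c|²). Define φ₀(z) = 1 − 2 z^{N+1}\overline{(z^{N+1}−c)}/(1+|z^{N+1}−c|²) and φ_{N+1}(z) = 2 z^{N+1}( 1 − z^{N+1}\overline{(z^{N+1}−c)}/(1+|z^{N+1}−c|²) ). Then for every z ∈ ℂ the following identities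 hold: Re φ₀(z) = Z₀(z) − 2c₁Z₁(z) − 2c₂Z₂(z); (1/2)Re φ_{N+1}(z) = c₁Z₀(z) + (1−c₁²+c₂²)Z₁(z) − 2c₁c₂Z₂(z); and (1/2)Im φ_{N+1}(z) = c₂Z₀(z) − 2c₁c₂Z₁(z) + (1+c₁²−c₂²)Z₂(z). -/
/-!
Write `u = z^{N+1} - c` and `D = 1 + |u|²`. Since `(u + c) ū = |u|² + c ū`, the quotients in
`φ₀` and `φ_{N+1}` simplify to `φ₀ = (1 - |u|² - 2 c ū) / D` and
`φ_{N+1} / 2 = (c (1 - |u|²) + u - c² ū) / D`, whose real and imaginary parts are the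
claimed combinations of `Z₀ = (1 - |u|²) / D`, `Z₁ = Re u / D` and `Z₂ = Im u / D`.
-/

open ComplexConjugate

lemma ofReal_one_add_norm_sq_ne_zero (u : ℂ) : ((1 + ‖u‖ ^ 2 : ℝ) : ℂ) ≠ 0 :=
  Complex.ofReal_ne_zero.mpr (by positivity)

lemma one_sub_two_mul_conj_div (u c : ℂ) :
    1 - 2 * (u + c) * conj u / ((1 + ‖u‖ ^ 2 : ℝ) : ℂ) =
      ((1 - ‖u‖ ^ 2 : ℝ) - 2 * c * conj u) / ((1 + ‖u‖ ^ 2 : ℝ) : ℂ) := by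
  have hD := ofReal_one_add_norm_sq_ne_zero u
  field_simp
  push_cast
  linear_combination (-2 : ℂ) * Complex.mul_conj' u

lemma two_mul_one_sub_mul_conj_div (u c : ℂ) :
    2 * (u + c) * (1 - (u + c) * conj u / ((1 + ‖u‖ ^ 2 : ℝ) : ℂ)) =
      2 * ((c * (1 - ‖u‖ ^ 2 : ℝ) + u - c ^ 2 * conj u) / ((1 + ‖u‖ ^ 2 : ℝ) : ℂ)) := by
  have hD := ofReal_one_add_norm_sq_ne_zero u
  field_simp
  push_cast
  linear_combination (-(u + 2 * c)) * Complex.mul_conj' u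

/-- Expression of `Re φ₀`, `(1/2)Re φ_{N+1}` and `(1/2)Im φ_{N+1}` as explicit real
linear combinations of `Z₀, Z₁, Z₂`, with coefficients depending on `c = c₁ + ic₂`. -/
theorem phi_in_terms_of_Z (c : ℂ) (c₁ c₂ : ℝ) (hc : c = Complex.mk c₁ c₂) (N : ℕ)
    (Z₀ Z₁ Z₂ : ℂ → ℝ)
    (hZ₀ : ∀ z : ℂ, Z₀ z = (1 - ‖z ^ (N + 1) - c‖ ^ 2) /
      (1 + ‖z ^ (N + 1) - c‖ ^ 2))
    (hZ₁ : ∀ z : ℂ, Z₁ z = (z ^ (N + 1) - c).re / (1 + ‖z ^ (N + 1) - c‖ ^ 2))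
    (hZ₂ : ∀ z : ℂ, Z₂ z = (z ^ (N + 1) - c).im / (1 + ‖z ^ (N + 1) - c‖ ^ 2))
    (φ₀ φN1 : ℂ → ℂ)
    (hφ₀ : ∀ z : ℂ, φ₀ z = 1 - 2 * z ^ (N + 1) * (starRingEnd ℂ) (z ^ (N + 1) - c) /
      (((1 + ‖z ^ (N + 1) - c‖ ^ 2 : ℝ)) : ℂ))
    (hφN1 : ∀ z : ℂ, φN1 z = 2 * z ^ (N + 1) *
      (1 - z ^ (N + 1) * (starRingEnd ℂ) (z ^ (N + 1) - c) /
        (((1 + ‖z ^ (N + 1) - c‖ ^ 2 : ℝ)) : ℂ))) :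
    ∀ z : ℂ,
      (φ₀ z).re = Z₀ z - 2 * c₁ * Z₁ z - 2 * c₂ * Z₂ z ∧
      (1 / 2 : ℝ) * (φN1 z).re =
        c₁ * Z₀ z + (1 - c₁ ^ 2 + c₂ ^ 2) * Z₁ z - 2 * c₁ * c₂ * Z₂ z ∧
      (1 / 2 : ℝ) * (φN1 z).im =
        c₂ * Z₀ z - 2 * c₁ * c₂ * Z₁ z + (1 + c₁ ^ 2 - c₂ ^ 2) * Z₂ z := by
  intro z
  rw [hZ₀, hZ₁, hZ₂, hφ₀, hφN1]
  set u := z ^ (N + 1) - c with hu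
  rw [show z ^ (N + 1) = u + c by rw [hu, sub_add_cancel],
    one_sub_two_mul_conj_div, two_mul_one_sub_mul_conj_div]
  subst hc
  simp only [Complex.div_ofReal_re, Complex.div_ofReal_im, Complex.mul_re, Complex.mul_im,
    Complex.sub_re, Complex.sub_im, Complex.add_re, Complex.add_im, Complex.ofReal_re,
    Complex.ofReal_im, Complex.conj_re, Complex.conj_im, Complex.re_ofNat, Complex.im_ofNat,
    pow_two]
  refine ⟨?_, ?_, ?_⟩ <;> ring
end
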